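/- Let Δ be a (d−1)-dimensional balanced simplicial complex on [n] with coloring map κ, let 0 ≤ p ≤ d, S = {1,…,p}, T = {p+1,…,d}, and let Θ = θ_1,…,θ_p,θ'_{p+1},…,θ'_d be an l.s.o.p. of A = K[Δ] with θ_i = Σ_{κ(v)=i} x_v for i ≤ p and θ'_i ∈ K[x_v : κ(v) ∈ T] for i > p. Give R the Z^{p+1}-grading with deg x_v = e_{κ(v)} for κ(v) ∈ S and deg x_v = e_0 for κ(v) ∈ T. Let N = ⊕_{F ∈ Δ, κ(F)=S} K[lk_Δ(F)]/(Θ'_T K[lk_Δ(F)]), where Θ'_T = θ'_{p+1},…,θ'_d. Then there exists a surjective degree-preserving homomorphism of R-modules ψ: N(−e_S) → (A/ΘA)_{≥ e_S}, where e_S = Σ_{i∈S} e_i and M_{≥a} = ⊕_{b ≥ a} M_b. -/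

import Mathlib

open Finset BigOperators

namespace BGLB

variable {V : Type*} [DecidableEq V]

/-- `Δ` is an (abstract) simplicial complex: it contains the empty face and is
closed under taking subsets. -/
def IsComplex (Δ : Finset (Finset V)) : Prop :=
  ∅ ∈ Δ ∧ ∀ F ∈ Δ, ∀ G ⊆ F, G ∈ Δ

/-- `Δ` is pure of dimension `d - 1`: every face is contained in a face of cardinality `d`. -/
def IsPure (d : ℕ) (Δ : Finset (Finset V)) : Prop :=
  ∀ F ∈ Δ, ∃ G ∈ Δ, F ⊆ G ∧ G.card = d

/-- `Δ` has dimension at most `d - 1`. -/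
def DimLE (d : ℕ) (Δ : Finset (Finset V)) : Prop := ∀ F ∈ Δ, F.card ≤ d

/-- `Δ` has dimension exactly `d - 1`. -/
def DimEq (d : ℕ) (Δ : Finset (Finset V)) : Prop := DimLE d Δ ∧ ∃ F ∈ Δ, F.card = d

/-- `fNum Δ j` is the number `f_{j-1}(Δ)` of faces of `Δ` of cardinality `j`. -/
def fNum (Δ : Finset (Finset V)) (j : ℕ) : ℕ := (Δ.filter fun F => F.card = j).card

/-- The `h`-numbers of `Δ` with respect to the dimension parameter `d`:
`h_i = ∑_{j=0}^{i} (-1)^{i-j} C(d-j, i-j) f_{j-1}`. -/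
def hNum (d : ℕ) (Δ : Finset (Finset V)) (i : ℕ) : ℤ :=
  ∑ j ∈ Finset.range (i + 1), (-1 : ℤ) ^ (i - j) * ((d - j).choose (i - j)) * fNum Δ j

/-- The balanced `g`-numbers `g̅_i = i h_i - (d - i + 1) h_{i-1}` (with `h_{-1} = 0`). -/
def gbar (d : ℕ) (Δ : Finset (Finset V)) : ℕ → ℤ
  | 0 => 0
  | i + 1 => (i + 1 : ℤ) * hNum d Δ (i + 1) - ((d : ℤ) - (i + 1) + 1) * hNum d Δ i

/-- `κ` is a proper `d`-coloring of (the graph of) `Δ`: the two endpoints of any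
edge get different colors. -/
def IsBalanced (d : ℕ) (Δ : Finset (Finset V)) (κ : V → Fin d) : Prop :=
  ∀ F ∈ Δ, F.card = 2 → ∀ x ∈ F, ∀ y ∈ F, x ≠ y → κ x ≠ κ y

/-- The rank-selected subcomplex `Δ_T = {F ∈ Δ : κ(F) ⊆ T}`. -/
def rankSel {d : ℕ} (Δ : Finset (Finset V)) (κ : V → Fin d) (T : Finset (Fin d)) :
    Finset (Finset V) :=
  Δ.filter fun F => ∀ v ∈ F, κ v ∈ T

/-- The link `lk_Δ(F) = {G ∈ Δ : F ∪ G ∈ Δ, F ∩ G = ∅}`. -/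
def link (Δ : Finset (Finset V)) (F : Finset V) : Finset (Finset V) :=
  Δ.filter fun G => Disjoint F G ∧ F ∪ G ∈ Δ





/-- The Stanley-Reisner ideal of `Δ` in `K[x_v : v ∈ V]`: the ideal generated by the
squarefree monomials `x_F = ∏_{v ∈ F} x_v` for the non-faces `F ∉ Δ`. -/
noncomputable def srIdeal (K : Type*) [Field K] (Δ : Finset (Finset V)) : Ideal (MvPolynomial V K) :=
  Ideal.span {m | ∃ F : Finset V, F ∉ Δ ∧ m = ∏ v ∈ F, MvPolynomial.X v}

/-- The sum of variables of color `i`: `θ_i = ∑_{κ(v) = i} x_v`. -/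
noncomputable def colorSum (K : Type*) [Field K] {n d : ℕ} (κ : Fin n → Fin d) (i : Fin d) :
    MvPolynomial (Fin n) K :=
  ∑ v ∈ Finset.univ.filter (fun v => κ v = i), MvPolynomial.X v

/-- The degree `i` component (w.r.t. the standard grading) of the quotient of a
polynomial ring by the ideal `I`, as the image of the degree `i` homogeneous part. -/
noncomputable def piece (K : Type*) [Field K] {σ : Type*} (I : Ideal (MvPolynomial σ K)) (i : ℕ) :
    Submodule K (MvPolynomial σ K ⧸ I) :=
  (MvPolynomial.homogeneousSubmodule σ K i).map (Ideal.Quotient.mkₐ K I).toLinearMap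

/-- The degree `a` component (w.r.t. the grading weighted by `w`) of the quotient of a
polynomial ring by the ideal `I`. -/
noncomputable def wpiece (K : Type*) [Field K] {σ M : Type*} [AddCommMonoid M] (w : σ → M)
    (I : Ideal (MvPolynomial σ K)) (a : M) :
    Submodule K (MvPolynomial σ K ⧸ I) :=
  (MvPolynomial.weightedHomogeneousSubmodule K w a).map (Ideal.Quotient.mkₐ K I).toLinearMap

/-- `θ` is a linear system of parameters for `(MvPolynomial σ K) ⧸ I`:
a sequence of linear forms such that the quotient by them is a finite-dimensional
`K`-vector space. -/
def IsLSOP (K : Type*) [Field K] {σ : Type*} (I : Ideal (MvPolynomial σ K)) {m : ℕ}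
    (θ : Fin m → MvPolynomial σ K) : Prop :=
  (∀ i, θ i ∈ MvPolynomial.homogeneousSubmodule σ K 1) ∧
    FiniteDimensional K (MvPolynomial σ K ⧸ (I ⊔ Ideal.span (Set.range θ)))

/-- `Δ` (of dimension `d - 1`) is Cohen-Macaulay over `K`: every linear system of
parameters of the Stanley-Reisner ring `K[Δ]` is a regular sequence on `K[Δ]`. -/
def IsCM (K : Type*) [Field K] (d : ℕ) (Δ : Finset (Finset V)) : Prop :=
  ∀ θ : Fin d → MvPolynomial V K, IsLSOP K (srIdeal K Δ) θ →
    RingTheory.Sequence.IsRegular (MvPolynomial V K ⧸ srIdeal K Δ) (List.ofFn θ)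

section Homology

variable [LinearOrder V] [Fintype V] (K : Type*) [Field K]

/-- The faces of `Δ` of cardinality `k`. -/
def Faces (Δ : Finset (Finset V)) (k : ℕ) : Type _ := {F : Finset V // F ∈ Δ ∧ F.card = k}

/-- The simplicial (reduced) boundary map from `k+1`-element faces to `k`-element faces:
`∂(e_F) = ∑_{v ∈ F} (-1)^{|{u ∈ F : u < v}|} e_{F \ v}`, written in the dual basis. -/
noncomputable def bdry (Δ : Finset (Finset V)) (k : ℕ) :
    ((Faces Δ (k + 1) → K) →ₗ[K] (Faces Δ k → K)) :=
  LinearMap.pi fun G =>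
    ∑ v ∈ Finset.univ \ G.1,
      if h : insert v G.1 ∈ Δ ∧ (insert v G.1).card = k + 1 then
        ((-1 : K) ^ (G.1.filter (fun u => u < v)).card) •
          (LinearMap.proj (⟨insert v G.1, h⟩ : Faces Δ (k + 1)))
      else 0

/-- The reduced cycles in cardinality `k`: everything for `k = 0` (chains on the empty
face), and the kernel of the boundary map for `k ≥ 1`. -/
noncomputable def cycles (Δ : Finset (Finset V)) : (k : ℕ) → Submodule K (Faces Δ k → K)
  | 0 => ⊤
  | j + 1 => LinearMap.ker (bdry K Δ j)

/-- The reduced simplicial homology `H̃_{k-1}(Δ; K)` (indexed so that `k` is the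
cardinality of the faces involved): cycles modulo boundaries. -/
noncomputable abbrev redHomology (Δ : Finset (Finset V)) (k : ℕ) :=
  cycles K Δ k ⧸ (LinearMap.range (bdry K Δ k)).comap (cycles K Δ k).subtype

/-- `Δ` (of dimension `d-1`) is Gorenstein* over `K`: for every face `F ∈ Δ`, the link of
`F` has the reduced homology of a sphere of dimension `d - 1 - #F`. -/
def IsGorensteinStar (d : ℕ) (Δ : Finset (Finset V)) : Prop :=
  ∀ F ∈ Δ, ∀ k : ℕ,
    (k = d - F.card → Nonempty (redHomology K (link Δ F) k ≃ₗ[K] K)) ∧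
    (k ≠ d - F.card → Subsingleton (redHomology K (link Δ F) k))

end Homology

/-- The flag `f`-number `f_S(Δ) = #{F ∈ Δ : κ(F) = S}`. -/
def fFlag {d : ℕ} (κ : V → Fin d) (Δ : Finset (Finset V)) (S : Finset (Fin d)) : ℕ :=
  (Δ.filter fun F => F.image κ = S).card

/-- The flag `h`-number `h_S(Δ) = ∑_{T ⊆ S} (-1)^{#S - #T} f_T(Δ)`. -/
def hFlag {d : ℕ} (κ : V → Fin d) (Δ : Finset (Finset V)) (S : Finset (Fin d)) : ℤ :=
  ∑ T ∈ S.powerset, (-1 : ℤ) ^ (S.card - T.card) * fFlag κ Δ T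

/-- Index map `[d] → {0,1,…,p}`: a color `i ∈ S = {1,…,p}` goes to the coordinate `i`
of `ℤ^{p+1}` (here: color `i` with `i < p` goes to coordinate `i + 1`), and the colors
in `T = {p+1,…,d}` go to coordinate `0`. -/
def sIdx (p : ℕ) {d : ℕ} (i : Fin d) : Fin (p + 1) :=
  if h : (i : ℕ) < p then ⟨(i : ℕ) + 1, by omega⟩ else 0

/-- The `ℤ^{p+1}`-grading weights (`ℕ`-valued): `deg x_v = e_{κ(v)}` if `κ(v) ∈ S`
and `deg x_v = e_0` if `κ(v) ∈ T`. -/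
noncomputable def wtN (p : ℕ) {n d : ℕ} (κ : Fin n → Fin d) (v : Fin n) : Fin (p + 1) →₀ ℕ :=
  Finsupp.single (sIdx p (κ v)) 1

/-- The `ℤ^{p+1}`-grading weights (`ℤ`-valued). -/
noncomputable def wtZ (p : ℕ) {n d : ℕ} (κ : Fin n → Fin d) (v : Fin n) : Fin (p + 1) →₀ ℤ :=
  Finsupp.single (sIdx p (κ v)) 1

/-! For a face `F` with `κ(F) = S`, multiplication by `x^F` induces a map
`K[lk_Δ F]/Θ'_T → A/ΘA`: a non-face `G` of the link either makes `F ∪ G` a non-face or meets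
`F`, and for `a ∈ F` the product `x_a x^F` is congruent to `θ_{κ(a)} x^F` modulo `I_Δ`, since
in a balanced complex no other vertex of color `κ(a)` extends `F`. `ψ` is the sum of these
maps, so its image is generated by the `x^F`; a monomial of degree `≥ e_S` is divisible by a
squarefree `x^F` with `κ(F) = S`, which is either a face monomial or zero in `K[Δ]`. -/

theorem _root_.LinearMap.range_lsum {R S M ι : Type*} {φ : ι → Type*} [Semiring R] [Semiring S]
    [Fintype ι] [DecidableEq ι] [∀ i, AddCommMonoid (φ i)] [∀ i, Module R (φ i)]
    [AddCommMonoid M] [Module R M] [Module S M] [SMulCommClass R S M]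
    (f : ∀ i, φ i →ₗ[R] M) :
    LinearMap.range (LinearMap.lsum R φ S f) = ⨆ i, LinearMap.range (f i) := by
  apply le_antisymm
  · rintro _ ⟨x, rfl⟩
    rw [LinearMap.lsum_apply, LinearMap.sum_apply]
    exact Submodule.sum_mem _ fun i _ =>
      Submodule.mem_iSup_of_mem i (LinearMap.mem_range_self _ _)
  · exact iSup_le fun i => by
      rintro _ ⟨x, rfl⟩
      exact ⟨Pi.single i x, LinearMap.lsum_piSingle R φ S f i x⟩

section MulQuotient

open Ideal

variable {R : Type*} [CommRing R] {I J : Ideal R} {r : R}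

noncomputable def _root_.Ideal.mulQuotient (r : R) (h : I ≤ J.colon {r}) :
    R ⧸ I →ₗ[R] R ⧸ J :=
  Submodule.mapQ I J (LinearMap.mulRight R r) fun _ hx => by
    simpa using Submodule.mem_colon_singleton.1 (h hx)

theorem _root_.Ideal.range_mulQuotient (h : I ≤ J.colon {r}) :
    LinearMap.range (mulQuotient r h) = Submodule.map J.mkQ (span {r}) := by
  unfold mulQuotient
  rw [Submodule.range_mapQ]
  congr 1
  ext x
  simp [mem_span_singleton', eq_comm]

end MulQuotient

section Monomial

open MvPolynomial

variable {σ R M : Type*} [CommSemiring R]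

theorem _root_.MvPolynomial.prod_X_eq_monomial [DecidableEq σ] (F : Finset σ) :
    ∏ v ∈ F, X v = (monomial (∑ v ∈ F, Finsupp.single v 1) 1 : MvPolynomial σ R) := by
  rw [monomial_sum_one]
  rfl

theorem _root_.MvPolynomial.prod_X_dvd_monomial {F : Finset σ} {μ : σ →₀ ℕ}
    (hF : F ⊆ μ.support) :
    ∏ v ∈ F, X v ∣ (monomial μ 1 : MvPolynomial σ R) := by
  rw [← prod_X_pow_eq_monomial]
  refine (Finset.prod_dvd_prod_of_dvd _ _ fun v hv => ?_).trans
    (Finset.prod_dvd_prod_of_subset _ _ _ hF)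
  exact dvd_pow_self _ (Finsupp.mem_support_iff.1 (hF hv))

theorem _root_.MvPolynomial.isWeightedHomogeneous_prod_X [AddCommMonoid M] (w : σ → M)
    (F : Finset σ) :
    IsWeightedHomogeneous w (∏ v ∈ F, X v : MvPolynomial σ R) (∑ v ∈ F, w v) :=
  IsWeightedHomogeneous.prod _ _ _ fun v _ => isWeightedHomogeneous_X R w v

end Monomial

theorem _root_.Finsupp.weight_sum_single_one {σ M : Type*} [AddCommMonoid M] (w : σ → M)
    (F : Finset σ) : Finsupp.weight w (∑ v ∈ F, Finsupp.single v 1) = ∑ v ∈ F, w v := by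
  simp [map_sum, Finsupp.weight_single]

theorem _root_.Finsupp.exists_mem_support_of_weight_apply_ne_zero {σ ι : Type*}
    {w : σ → ι →₀ ℕ} {μ : σ →₀ ℕ} {j : ι} (h : Finsupp.weight w μ j ≠ 0) :
    ∃ v ∈ μ.support, w v j ≠ 0 := by
  rw [Finsupp.weight_apply, Finsupp.sum, Finsupp.finsetSum_apply] at h
  obtain ⟨v, hv, hne⟩ := exists_ne_zero_of_sum_ne_zero h
  exact ⟨v, hv, right_ne_zero_of_mul (by simpa using hne)⟩

open MvPolynomial

theorem prod_X_mem_srIdeal {σ K : Type*} [Field K] {Δ : Finset (Finset σ)} {F : Finset σ}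
    (hF : F ∉ Δ) : ∏ v ∈ F, X v ∈ srIdeal K Δ :=
  Ideal.subset_span ⟨F, hF, rfl⟩

section StanleyReisner

variable {K : Type*} [Field K] {Δ : Finset (Finset V)}

theorem IsBalanced.pair_notMem {d : ℕ} {κ : V → Fin d} (hκ : IsBalanced d Δ κ) {u v : V}
    (hne : u ≠ v) (he : κ u = κ v) : {u, v} ∉ Δ :=
  fun h => hκ _ h (card_pair hne) u (by simp) v (by simp) hne he

theorem IsBalanced.injOn_face {d : ℕ} {κ : V → Fin d} (hΔ : IsComplex Δ)
    (hκ : IsBalanced d Δ κ) {F : Finset V} (hF : F ∈ Δ) : Set.InjOn κ F := by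
  intro u hu v hv he
  by_contra hne
  exact hκ.pair_notMem hne he (hΔ.2 F hF _ (insert_subset hu (singleton_subset_iff.2 hv)))

theorem srIdeal_link_le_colon (hΔ : IsComplex Δ) {F : Finset V}
    {J : Ideal (MvPolynomial V K)} (hJ : srIdeal K Δ ≤ J)
    (hF : ∀ a ∈ F, X a * ∏ u ∈ F, X u ∈ J) :
    srIdeal K (link Δ F) ≤ J.colon {∏ u ∈ F, X u} := by
  rw [srIdeal, Ideal.span_le]
  rintro _ ⟨G, hG, rfl⟩
  rw [SetLike.mem_coe, Submodule.mem_colon_singleton, smul_eq_mul]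
  by_cases hFG : F ∪ G ∈ Δ
  · obtain ⟨a, haF, haG⟩ := not_disjoint_iff.1 fun hdis =>
      hG (mem_filter.2 ⟨hΔ.2 _ hFG G subset_union_right, hdis, hFG⟩)
    rw [← mul_prod_erase G _ haG, mul_comm (X a), mul_assoc]
    exact J.mul_mem_left _ (hF a haF)
  · rw [mul_comm, ← prod_union_inter]
    exact J.mul_mem_right _ (hJ (prod_X_mem_srIdeal hFG))

end StanleyReisner

theorem mulQuotient_mem_wpiece {K σ M : Type*} [Field K] [AddCommMonoid M] {w : σ → M}
    {I J : Ideal (MvPolynomial σ K)} {r : MvPolynomial σ K} {a b : M}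
    (hr : IsWeightedHomogeneous w r b) (h : I ≤ J.colon {r}) {x : MvPolynomial σ K ⧸ I}
    (hx : x ∈ wpiece K w I a) : Ideal.mulQuotient r h x ∈ wpiece K w J (a + b) := by
  obtain ⟨g, hg, rfl⟩ := Submodule.mem_map.1 hx
  exact ⟨g * r, (mem_weightedHomogeneousSubmodule ..).2 (hg.mul hr), rfl⟩

section Grading

variable {d p : ℕ}

theorem sIdx_eq_zero_iff {i : Fin d} : sIdx p i = 0 ↔ p ≤ i := by
  unfold sIdx
  split_ifs with h <;> simp [Fin.ext_iff] <;> omega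

theorem sIdx_injOn : Set.InjOn (sIdx p) {i : Fin d | (i : ℕ) < p} := by
  intro i hi j hj h
  simp only [sIdx, Set.mem_ofPred_eq] at hi hj h
  simpa [hi, hj, Fin.ext_iff] using h

theorem image_sIdx_filter_lt (hp : p ≤ d) :
    (univ.filter fun i : Fin d => (i : ℕ) < p).image (sIdx p) = univ.erase 0 := by
  ext j
  simp only [mem_image, mem_filter, mem_univ, true_and, mem_erase, and_true]
  constructor
  · rintro ⟨i, hi, rfl⟩
    exact sIdx_eq_zero_iff.not.2 (by omega)
  · intro hj
    have hj0 : (j : ℕ) ≠ 0 := fun h => hj (Fin.ext h)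
    refine ⟨⟨j - 1, by omega⟩, by simp; omega, ?_⟩
    simp only [sIdx, Fin.ext_iff]
    split_ifs <;> simp <;> omega

end Grading

section Balanced

variable {K : Type*} [Field K] {n d p : ℕ} {Δ : Finset (Finset (Fin n))} {κ : Fin n → Fin d}

theorem X_mul_prod_X_mem_of_colorSum_mem (hΔ : IsComplex Δ) (hκ : IsBalanced d Δ κ)
    {J : Ideal (MvPolynomial (Fin n) K)} (hJ : srIdeal K Δ ≤ J) {F : Finset (Fin n)}
    (hF : F ∈ Δ) {v : Fin n} (hv : v ∈ F) (hθ : colorSum K κ (κ v) ∈ J) :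
    X v * ∏ u ∈ F, X u ∈ J := by
  have hv' : v ∈ univ.filter fun u => κ u = κ v := by simp
  have hθF := J.mul_mem_right (∏ u ∈ F, X u) hθ
  rw [colorSum, ← add_sum_erase _ _ hv', add_mul, sum_mul] at hθF
  refine (J.add_mem_iff_left (Ideal.sum_mem _ fun u hu => ?_)).1 hθF
  obtain ⟨hne, hu⟩ := mem_erase.1 hu
  have hκu : κ u = κ v := (mem_filter.1 hu).2
  have huF : u ∉ F := fun h => hne (hκ.injOn_face hΔ hF h hv hκu)
  rw [← prod_insert huF]
  refine hJ <| prod_X_mem_srIdeal fun h => hκ.pair_notMem hne hκu <| hΔ.2 _ h _ ?_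
  exact insert_subset (mem_insert_self u F) (singleton_subset_iff.2 (mem_insert_of_mem hv))

theorem srIdeal_link_le_colon_of_image_eq (hΔ : IsComplex Δ) (hκ : IsBalanced d Δ κ)
    {J : Ideal (MvPolynomial (Fin n) K)} (hJ : srIdeal K Δ ≤ J)
    (hθ : ∀ i : Fin d, (i : ℕ) < p → colorSum K κ i ∈ J) {F : Finset (Fin n)}
    (hF : F ∈ Δ) (hFS : F.image κ = univ.filter fun i : Fin d => (i : ℕ) < p) :
    srIdeal K (link Δ F) ≤ J.colon {∏ u ∈ F, X u} := by
  refine srIdeal_link_le_colon hΔ hJ fun v hv =>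
    X_mul_prod_X_mem_of_colorSum_mem hΔ hκ hJ hF hv ?_
  exact hθ _ (by simpa [hFS] using mem_image_of_mem κ hv)

theorem sum_wtN_of_image_eq (hp : p ≤ d) (hΔ : IsComplex Δ) (hκ : IsBalanced d Δ κ)
    {F : Finset (Fin n)} (hF : F ∈ Δ)
    (hFS : F.image κ = univ.filter fun i : Fin d => (i : ℕ) < p) :
    ∑ v ∈ F, wtN p κ v = ∑ j ∈ univ.erase 0, Finsupp.single j 1 := by
  have hlt : ∀ i ∈ F.image κ, (i : ℕ) < p := fun i hi => by rw [hFS] at hi; simpa using hi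
  rw [← image_sIdx_filter_lt hp, ← hFS,
    sum_image fun i hi j hj => sIdx_injOn (hlt i hi) (hlt j hj), sum_image (hκ.injOn_face hΔ hF)]
  rfl

theorem exists_subset_support_image_eq {μ : Fin n →₀ ℕ}
    (hμ : ∑ j ∈ univ.erase 0, Finsupp.single j 1 ≤ Finsupp.weight (wtN p κ) μ) :
    ∃ F ⊆ μ.support, F.image κ = univ.filter fun i : Fin d => (i : ℕ) < p := by
  have hcolor :
      ∀ i : (univ.filter fun i : Fin d => (i : ℕ) < p), ∃ v ∈ μ.support, κ v = i := by
    rintro ⟨i, hi⟩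
    have hi : (i : ℕ) < p := (mem_filter.1 hi).2
    have hj : sIdx p i ≠ 0 := sIdx_eq_zero_iff.not.2 (by omega)
    have hw : Finsupp.weight (wtN p κ) μ (sIdx p i) ≠ 0 := by
      have := hμ (sIdx p i)
      simp [Finsupp.finsetSum_apply, Finsupp.single_apply, hj] at this
      omega
    obtain ⟨v, hv, hvi⟩ := Finsupp.exists_mem_support_of_weight_apply_ne_zero hw
    have hvi : sIdx p (κ v) = sIdx p i := by
      simpa [wtN, Finsupp.single_apply, eq_comm] using hvi
    have hv' : (κ v : ℕ) < p := by
      by_contra h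
      exact hj (hvi ▸ sIdx_eq_zero_iff.2 (by omega))
    exact ⟨v, hv, sIdx_injOn hv' hi hvi⟩
  choose v hv hκv using hcolor
  refine ⟨univ.image v, image_subset_iff.2 fun i _ => hv i, ?_⟩
  rw [image_image, univ_eq_attach]
  exact (congrArg (fun f => image f _) (funext hκv)).trans attach_image_val

theorem iSup_span_prod_X_le (hp : p ≤ d) (hΔ : IsComplex Δ) (hκ : IsBalanced d Δ κ) :
    ⨆ F : {F : Finset (Fin n) //
        F ∈ Δ ∧ F.image κ = univ.filter fun j : Fin d => (j : ℕ) < p},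
      Ideal.span {∏ u ∈ F.1, X u} ≤
    Ideal.span {m : MvPolynomial (Fin n) K | ∃ μ : Fin n →₀ ℕ,
      ∑ j ∈ univ.erase 0, Finsupp.single j 1 ≤ Finsupp.weight (wtN p κ) μ ∧
        m = monomial μ 1} :=
  iSup_le fun F => Ideal.span_le.2 <| Set.singleton_subset_iff.2 <| Ideal.subset_span
    ⟨_, by rw [Finsupp.weight_sum_single_one, sum_wtN_of_image_eq hp hΔ hκ F.2.1 F.2.2],
      prod_X_eq_monomial _⟩

theorem span_monomial_le_sup_iSup_span_prod_X :
    Ideal.span {m : MvPolynomial (Fin n) K | ∃ μ : Fin n →₀ ℕ,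
      ∑ j ∈ univ.erase 0, Finsupp.single j 1 ≤ Finsupp.weight (wtN p κ) μ ∧
        m = monomial μ 1} ≤
    srIdeal K Δ ⊔
      ⨆ F : {F : Finset (Fin n) //
          F ∈ Δ ∧ F.image κ = univ.filter fun j : Fin d => (j : ℕ) < p},
        Ideal.span {∏ u ∈ F.1, X u} := by
  rw [Ideal.span_le]
  rintro _ ⟨μ, hμ, rfl⟩
  obtain ⟨F, hFμ, hFS⟩ := exists_subset_support_image_eq hμ
  have hdvd := prod_X_dvd_monomial (R := K) hFμ
  by_cases hF : F ∈ Δ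
  · exact Ideal.mem_sup_right <|
      Submodule.mem_iSup_of_mem ⟨F, hF, hFS⟩ (Ideal.mem_span_singleton.2 hdvd)
  · exact Ideal.mem_sup_left (Ideal.mem_of_dvd _ hdvd (prod_X_mem_srIdeal hF))

end Balanced

set_option maxHeartbeats 1000000 in
/-- Lemma 2.3(i).
With `S = {1,…,p}`, `T = {p+1,…,d}` and `Θ` an l.s.o.p. of `A = K[Δ]` as in the paper,
let `N = ⊕_{F ∈ Δ, κ(F) = S} K[lk_Δ(F)]/(Θ'_T K[lk_Δ(F)])`. There is a surjective,
degree-preserving `R`-module homomorphism `ψ : N(-e_S) → (A/ΘA)_{≥ e_S}`: i.e. a map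
`ψ : N → A/ΘA` whose range is `(A/ΘA)_{≥ e_S}` and with `ψ(N_c) ⊆ (A/ΘA)_{c + e_S}`
for every degree `c ∈ ℤ^{p+1}`. -/
theorem link_surjection (K : Type*) [Field K] (n d p : ℕ)
    (hp : p ≤ d) (Δ : Finset (Finset (Fin n))) (hΔ : IsComplex Δ)
    (κ : Fin n → Fin d) (hκ : IsBalanced d Δ κ)
    (θ : Fin d → MvPolynomial (Fin n) K)
    (hθS : ∀ i : Fin d, (i : ℕ) < p → θ i = colorSum K κ i) :
    -- the ideal defining `A/ΘA`
    ∀ I' : Ideal (MvPolynomial (Fin n) K), I' = srIdeal K Δ ⊔ Ideal.span (Set.range θ) →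
    -- the ideals defining the summands of `N`
    ∀ IF : Finset (Fin n) → Ideal (MvPolynomial (Fin n) K),
      (∀ F, IF F = srIdeal K (link Δ F) ⊔
        Ideal.span (Set.range fun j : Fin (d - p) => θ ⟨p + (j : ℕ), by omega⟩)) →
    -- `e_S = e_1 + ⋯ + e_p`
    ∀ eS : Fin (p + 1) →₀ ℕ,
      eS = ∑ i ∈ Finset.univ.erase (0 : Fin (p + 1)), Finsupp.single i 1 →
    ∃ ψ : (∀ F : {F : Finset (Fin n) //
            F ∈ Δ ∧ F.image κ = Finset.univ.filter fun j : Fin d => (j : ℕ) < p},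
          MvPolynomial (Fin n) K ⧸ IF F.1) →ₗ[MvPolynomial (Fin n) K]
          MvPolynomial (Fin n) K ⧸ I',
      -- surjectivity onto `(A/ΘA)_{≥ e_S}`
      LinearMap.range ψ = Submodule.map (Submodule.mkQ I')
          (Ideal.span {m | ∃ μ : Fin n →₀ ℕ,
            eS ≤ Finsupp.weight (wtN p κ) μ ∧ m = MvPolynomial.monomial μ 1}) ∧
      -- `ψ` is degree-preserving as a map `N(-e_S) → (A/ΘA)_{≥ e_S}`
      ∀ (c : Fin (p + 1) →₀ ℕ) x,
        (∀ F, x F ∈ wpiece K (wtN p κ) (IF F.1) c) → ψ x ∈ wpiece K (wtN p κ) I' (c + eS) := by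
  rintro I' rfl IF hIF eS rfl
  have hθ : ∀ i, θ i ∈ srIdeal K Δ ⊔ Ideal.span (Set.range θ) :=
    fun i => Ideal.mem_sup_right (Ideal.subset_span ⟨i, rfl⟩)
  have hcolon : ∀ F : {F : Finset (Fin n) //
      F ∈ Δ ∧ F.image κ = Finset.univ.filter fun j : Fin d => (j : ℕ) < p},
      IF F.1 ≤ (srIdeal K Δ ⊔ Ideal.span (Set.range θ)).colon {∏ u ∈ F.1, X u} := by
    rintro ⟨F, hF, hFS⟩
    rw [hIF]
    refine sup_le (srIdeal_link_le_colon_of_image_eq hΔ hκ le_sup_left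
      (fun i hi => hθS i hi ▸ hθ i) hF hFS) ?_
    exact Ideal.span_le.2 (Set.range_subset_iff.2 fun j => Ideal.le_colon (hθ _))
  refine ⟨LinearMap.lsum _ _ ℕ fun F => Ideal.mulQuotient _ (hcolon F), ?_, fun c x hx => ?_⟩
  · simp_rw [LinearMap.range_lsum, Ideal.range_mulQuotient, ← Submodule.map_iSup]
    refine le_antisymm (Submodule.map_mono (iSup_span_prod_X_le hp hΔ hκ)) ?_
    rw [Submodule.map_le_iff_le_comap, Submodule.comap_map_mkQ]
    exact span_monomial_le_sup_iSup_span_prod_X.trans (sup_le_sup_right le_sup_left _)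
  · rw [LinearMap.lsum_apply, LinearMap.sum_apply]
    refine Submodule.sum_mem _ fun F _ => ?_
    rw [← sum_wtN_of_image_eq hp hΔ hκ F.2.1 F.2.2]
    exact mulQuotient_mem_wpiece (isWeightedHomogeneous_prod_X _ _) (hcolon F) (hx F)

end BGLB
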